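/- Suppose sequences (A_n)_{n\ge 0} and (B_n)_{n\ge 1} satisfy: A_0 = 1, A_n = \sum_{k=0}^{n-1} B_{n-k} A_k for n \ge 1, and B_n = \sum_{k=0}^{n-1} A_k \sum_{j=0}^{n-1-k} A_j A_{n-1-k-j} for n \ge 1. Then A_n = A_n(4,1) = \frac{1}{4n+1}\binom{4n+1}{n} for all n, and B_n = A_{n-1}(4,3) = \frac{3}{4n-1}\binom{4n-1}{n-1} for all n \ge 1. -/
import Mathlib


/-- The Fuss-Catalan number `A_n(p,q) = q/(pn+q) * C(pn+q, n)`,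
with the convention `A_0(p,q) = 1`. -/
def fussCatalan (p q n : ℕ) : ℚ :=
  if n = 0 then 1 else (q : ℚ) / (p * n + q) * ((p * n + q).choose n)

lemma choose_cast (a b : ℕ) : (((a+b).choose a : ℕ) : ℚ) = ((a+b).factorial : ℚ) / (a.factorial * b.factorial) := by
  rw [Nat.cast_choose ℚ (Nat.le_add_right a b), Nat.add_sub_cancel_left]

lemma fc_zero (q : ℕ) : fussCatalan 4 q 0 = 1 := by simp [fussCatalan]

lemma fc_q0 (n : ℕ) : fussCatalan 4 0 (n+1) = 0 := by simp [fussCatalan]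

lemma fact_ne (n : ℕ) : ((n.factorial : ℕ) : ℚ) ≠ 0 := by
  exact_mod_cast n.factorial_pos.ne'

lemma pascal (q n : ℕ) :
    fussCatalan 4 (q+1) (n+1) = fussCatalan 4 q (n+1) + fussCatalan 4 (q+4) n := by
  cases n with
  | zero =>
    simp only [fussCatalan, if_neg (Nat.one_ne_zero), if_pos rfl]
    rw [show 4*1+(q+1) = q+5 by ring, show 4*1+q = q+4 by ring,
      Nat.choose_one_right, Nat.choose_one_right]
    have h1 : ((q:ℚ)+5) ≠ 0 := by positivity
    have h2 : ((q:ℚ)+4) ≠ 0 := by positivity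
    push_cast
    field_simp
    ring
  | succ m =>
    simp only [fussCatalan, if_neg (Nat.succ_ne_zero _)]
    rw [show 4*(m+1+1)+(q+1) = (m+2)+(3*m+q+7) by ring,
        show 4*(m+1+1)+q = (m+2)+(3*m+q+6) by ring,
        show 4*(m+1)+(q+4) = (m+1)+(3*m+q+7) by ring,
        choose_cast, choose_cast, choose_cast,
        show (m+2)+(3*m+q+7) = (4*m+q+8)+1 by ring,
        show (m+2)+(3*m+q+6) = 4*m+q+8 by ring,
        show (m+1)+(3*m+q+7) = 4*m+q+8 by ring,
        show (3*m+q+7) = (3*m+q+6)+1 by ring,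
        show (m+2) = (m+1)+1 by ring,
        Nat.factorial_succ (4*m+q+8), Nat.factorial_succ (3*m+q+6),
        Nat.factorial_succ (m+1)]
    have hX := fact_ne (4*m+q+8)
    have hY := fact_ne (3*m+q+6)
    have hZ := fact_ne (m+1)
    have h1 : ((4:ℚ)*(m+1+1)+(q+1)) ≠ 0 := by push_cast; positivity
    have h2 : ((4:ℚ)*(m+1+1)+q) ≠ 0 := by push_cast; positivity
    have h3 : ((4:ℚ)*(m+1)+(q+4)) ≠ 0 := by push_cast; positivity
    push_cast
    field_simp
    ring

lemma shift (n : ℕ) : fussCatalan 4 4 n = fussCatalan 4 1 (n+1) := by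
  cases n with
  | zero => norm_num [fussCatalan]
  | succ m =>
    simp only [fussCatalan, if_neg (Nat.succ_ne_zero _)]
    rw [show 4*(m+1)+4 = (m+1)+(3*m+7) by ring,
        show 4*(m+1+1)+1 = (m+2)+(3*m+7) by ring,
        choose_cast, choose_cast,
        show (m+1)+(3*m+7) = 4*m+8 by ring,
        show (m+2)+(3*m+7) = (4*m+8)+1 by ring,
        show (m+2) = (m+1)+1 by ring,
        Nat.factorial_succ (4*m+8), Nat.factorial_succ (m+1)]
    have hX := fact_ne (4*m+8)
    have hY := fact_ne (3*m+7)
    have hZ := fact_ne (m+1)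
    have h1 : ((4:ℚ)*(m+1)+4) ≠ 0 := by positivity
    have h2 : ((4:ℚ)*(m+1+1)+1) ≠ 0 := by positivity
    push_cast
    field_simp
    ring

lemma conv (n : ℕ) : ∀ q r : ℕ,
    (∑ k ∈ Finset.range (n+1), fussCatalan 4 q k * fussCatalan 4 r (n-k))
      = fussCatalan 4 (q+r) n := by
  induction n with
  | zero => intro q r; simp [fc_zero]
  | succ n ih =>
    intro q r
    induction q with
    | zero =>
      rw [Finset.sum_eq_single 0]
      · simp [fc_zero]
      · intro b _ hb
        obtain ⟨c, rfl⟩ := Nat.exists_eq_succ_of_ne_zero hb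
        rw [fc_q0]; ring
      · intro h; exact absurd (Finset.mem_range.mpr (Nat.succ_pos _)) h
    | succ q ihq =>
      rw [Finset.sum_range_succ']
      have step : ∀ k ∈ Finset.range (n+1),
          fussCatalan 4 (q+1) (k+1) * fussCatalan 4 r (n+1-(k+1))
          = fussCatalan 4 q (k+1) * fussCatalan 4 r (n-k)
            + fussCatalan 4 (q+4) k * fussCatalan 4 r (n-k) := by
        intro k _
        rw [pascal, Nat.succ_sub_succ]
        ring
      rw [Finset.sum_congr rfl step, Finset.sum_add_distrib, ih (q+4) r, fc_zero]
      simp only [Nat.sub_zero, one_mul]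
      rw [Finset.sum_range_succ'] at ihq
      simp only [Nat.succ_sub_succ, Nat.sub_zero, fc_zero, one_mul] at ihq
      rw [add_right_comm, ihq, show q+1+r = (q+r)+1 by ring, pascal (q+r) n,
        show q+r+4 = q+4+r by ring]

theorem ta_diagram_recurrences_determine_fussCatalan
    (A B : ℕ → ℚ)
    (hA0 : A 0 = 1)
    (hA : ∀ n : ℕ, 1 ≤ n → A n = ∑ k ∈ Finset.range n, B (n - k) * A k)
    (hB : ∀ n : ℕ, 1 ≤ n →
      B n = ∑ k ∈ Finset.range n, A k *
        ∑ j ∈ Finset.range (n - k), A j * A (n - 1 - k - j)) :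
    (∀ n : ℕ, A n = fussCatalan 4 1 n) ∧
    (∀ n : ℕ, 1 ≤ n → B n = fussCatalan 4 3 (n - 1)) := by
  suffices h : ∀ n, A n = fussCatalan 4 1 n ∧ (1 ≤ n → B n = fussCatalan 4 3 (n-1)) by
    exact ⟨fun n => (h n).1, fun n hn => (h n).2 hn⟩
  intro n
  induction n using Nat.strong_induction_on with
  | _ n ih =>
    match n with
    | 0 => exact ⟨by rw [hA0, fc_zero], by omega⟩
    | m+1 =>
      have hBn : B (m+1) = fussCatalan 4 3 m := by
        rw [hB (m+1) (Nat.le_add_left 1 m)]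
        have outer : ∀ k ∈ Finset.range (m+1),
            A k * ∑ j ∈ Finset.range (m+1-k), A j * A (m+1-1-k-j)
            = fussCatalan 4 1 k * fussCatalan 4 2 (m-k) := by
          intro k hk
          have hkm : k ≤ m := Nat.lt_succ_iff.mp (Finset.mem_range.mp hk)
          have inner : ∀ j ∈ Finset.range (m+1-k), A j * A (m+1-1-k-j)
              = fussCatalan 4 1 j * fussCatalan 4 1 ((m-k)-j) := by
            intro j hj
            have hj' : j < m+1-k := Finset.mem_range.mp hj
            rw [(ih j (by omega)).1, (ih (m+1-1-k-j) (by omega)).1,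
              show m+1-1-k-j = (m-k)-j by omega]
          rw [Finset.sum_congr rfl inner, (ih k (by omega)).1,
            show m+1-k = (m-k)+1 by omega, conv (m-k) 1 1]
        rw [Finset.sum_congr rfl outer, conv m 1 2]
      refine ⟨?_, fun _ => by simpa using hBn⟩
      rw [hA (m+1) (Nat.le_add_left 1 m)]
      have outer : ∀ k ∈ Finset.range (m+1),
          B (m+1-k) * A k = fussCatalan 4 1 k * fussCatalan 4 3 (m-k) := by
        intro k hk
        have hkm : k ≤ m := Nat.lt_succ_iff.mp (Finset.mem_range.mp hk)
        have hBk : B (m+1-k) = fussCatalan 4 3 (m-k) := by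
          rcases Nat.eq_zero_or_pos k with rfl | hk0
          · simpa using hBn
          · have := (ih (m+1-k) (by omega)).2 (by omega)
            rwa [show m+1-k-1 = m-k by omega] at this
        rw [hBk, (ih k (by omega)).1, mul_comm]
      rw [Finset.sum_congr rfl outer, conv m 1 3, shift m]
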